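/- Let p be an integer. Let H'_p be the presented group on three generators a, b, c with relators (writing d := b a b⁻¹ and [x, y] := x y x⁻¹ y⁻¹) r₁ = d a d [c, d] a⁻¹ [c, d] b⁻¹, r₂ = c d c² b a⁻¹ b⁻¹ c⁻¹ a [d, c] [b, a⁻¹] a [a⁻¹, b] [c, d] a⁻¹ [c, d] c⁻¹ [d, c] a [d, c] [b, a⁻¹] a⁻¹ [a⁻¹, b] [c, d] a⁻¹ [c, d] c⁻¹, and the additional relator c⁻¹ · ([b, a⁻¹][b⁻¹, a])^p. Let K'_p be the presented group on two generators x, z with the single relator x z x z⁻¹ [y, z x z⁻¹] · ( z x⁻¹ [z x z⁻¹, y] x )⁻¹, where y abbreviates the word ([z, x⁻¹][z⁻¹, x])^p. Then the group homomorphism H'_p → K'_p determined by a ↦ x, b ↦ z, c ↦ ([z, x⁻¹][z⁻¹, x])^p is well defined and is an isomorphism. -/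

import Mathlib

/-!
Put `w := [b, a⁻¹][b⁻¹, a]`. In `H'_p` the last relator says `c = w ^ p`, so `c` can be eliminated
(a Tietze transformation). Writing `R(x, z, y)` for the relator of `K'_p` with `y` left free, the
relator `r₁` is the conjugate of `R(a, b, c)` by `d = b a b⁻¹`, and `r₂` is a product of conjugates of
`R(a, b, c)^{±1}` and of `[c, w]`, which vanishes because `c` is a power of `w`. Hence the relators of
either presentation hold in the other group and the two evident homomorphisms are mutually inverse.
-/

namespace Stmt15

open scoped commutatorElement

/-- The relators of the presented group `H'_p` on the three generators
`a, b, c` (encoded as `0, 1, 2 : Fin 3`), written with `d := b a b⁻¹` and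
commutators `⁅x, y⁆ = x y x⁻¹ y⁻¹`: the two relators `r₁, r₂` together with
the additional relator `c⁻¹ · ([b,a⁻¹][b⁻¹,a])^p`. -/
def relsH (p : ℤ) : Set (FreeGroup (Fin 3)) :=
  let a : FreeGroup (Fin 3) := FreeGroup.of 0
  let b : FreeGroup (Fin 3) := FreeGroup.of 1
  let c : FreeGroup (Fin 3) := FreeGroup.of 2
  let d : FreeGroup (Fin 3) := b * a * b⁻¹
  { d * a * d * ⁅c, d⁆ * a⁻¹ * ⁅c, d⁆ * b⁻¹,
    c * d * c ^ 2 * b * a⁻¹ * b⁻¹ * c⁻¹ * a * ⁅d, c⁆ * ⁅b, a⁻¹⁆ * a * ⁅a⁻¹, b⁆ *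
      ⁅c, d⁆ * a⁻¹ * ⁅c, d⁆ * c⁻¹ * ⁅d, c⁆ * a * ⁅d, c⁆ * ⁅b, a⁻¹⁆ * a⁻¹ * ⁅a⁻¹, b⁆ *
      ⁅c, d⁆ * a⁻¹ * ⁅c, d⁆ * c⁻¹,
    c⁻¹ * (⁅b, a⁻¹⁆ * ⁅b⁻¹, a⁆) ^ p }

/-- The single relator of the presented group `K'_p` on the two generators
`x, z` (encoded as `0, 1 : Fin 2`), where `y` abbreviates
`([z,x⁻¹][z⁻¹,x])^p`. -/
def relsK (p : ℤ) : Set (FreeGroup (Fin 2)) :=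
  let x : FreeGroup (Fin 2) := FreeGroup.of 0
  let z : FreeGroup (Fin 2) := FreeGroup.of 1
  let y : FreeGroup (Fin 2) := (⁅z, x⁻¹⁆ * ⁅z⁻¹, x⁆) ^ p
  { x * z * x * z⁻¹ * ⁅y, z * x * z⁻¹⁆ * (z * x⁻¹ * ⁅z * x * z⁻¹, y⁆ * x)⁻¹ }

section Relators

variable {G H : Type*} [Group G] [Group H]

def commWord (x z : G) : G := ⁅z, x⁻¹⁆ * ⁅z⁻¹, x⁆

def relatorK (x z y : G) : G :=
  x * z * x * z⁻¹ * ⁅y, z * x * z⁻¹⁆ * (z * x⁻¹ * ⁅z * x * z⁻¹, y⁆ * x)⁻¹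

def relatorH₁ (a b c : G) : G :=
  let d := b * a * b⁻¹
  d * a * d * ⁅c, d⁆ * a⁻¹ * ⁅c, d⁆ * b⁻¹

def relatorH₂ (a b c : G) : G :=
  let d := b * a * b⁻¹
  c * d * c ^ 2 * b * a⁻¹ * b⁻¹ * c⁻¹ * a * ⁅d, c⁆ * ⁅b, a⁻¹⁆ * a * ⁅a⁻¹, b⁆ *
    ⁅c, d⁆ * a⁻¹ * ⁅c, d⁆ * c⁻¹ * ⁅d, c⁆ * a * ⁅d, c⁆ * ⁅b, a⁻¹⁆ * a⁻¹ * ⁅a⁻¹, b⁆ *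
    ⁅c, d⁆ * a⁻¹ * ⁅c, d⁆ * c⁻¹

theorem relatorH₁_eq_conj (a b c : G) :
    relatorH₁ a b c = b * a * b⁻¹ * relatorK a b c * (b * a * b⁻¹)⁻¹ := by
  simp only [relatorH₁, relatorK, commutatorElement_def]
  group

theorem relatorH₁_eq_one_iff {a b c : G} : relatorH₁ a b c = 1 ↔ relatorK a b c = 1 := by
  rw [relatorH₁_eq_conj, conj_eq_one_iff]

theorem relatorH₂_eq_one {a b c : G} (hK : relatorK a b c = 1)
    (hc : Commute c (commWord a b)) : relatorH₂ a b c = 1 := by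
  -- The conjugators record a rewriting of `r₂` to the empty word that applies the relator of
  -- `K'_p` four times and `[c, w]` once.
  let d := b * a * b⁻¹
  let g₁ := c * d * c ^ 2 * d⁻¹ * c⁻¹ * a * ⁅d, c⁆ * d⁻¹
  let g₂ := c * d * c ^ 2 * d⁻¹ * c⁻¹ * a * ⁅d, c⁆ * b * a⁻¹ ^ 2 * c⁻¹ * ⁅d, c⁆ * a * ⁅d, c⁆ *
    d⁻¹ * a⁻¹
  let g₃ := c * d * c * d⁻¹ * a * b⁻¹
  let g₄ := g₃ * a * b * a⁻¹ * c⁻¹ * a * b⁻¹ * a⁻¹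
  let g₅ := g₄ * b * a⁻¹ * d
  let k := relatorK a b c
  have key : relatorH₂ a b c = g₁ * k * g₁⁻¹ * (g₂ * k * g₂⁻¹)⁻¹ * (g₃ * k * g₃⁻¹)⁻¹ *
      (g₄ * k * g₄⁻¹) * (g₅ * ⁅c, commWord a b⁆ * g₅⁻¹) := by
    simp only [relatorH₂, relatorK, commWord, commutatorElement_def, g₁, g₂, g₃, g₄, g₅, k, d]
    group
  rw [key, show k = 1 from hK, commutatorElement_eq_one_iff_commute.mpr hc]
  group

theorem map_commWord (f : G →* H) (x z : G) : f (commWord x z) = commWord (f x) (f z) := by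
  simp only [commWord, map_mul, map_commutatorElement, map_inv]

theorem map_relatorK (f : G →* H) (x z y : G) :
    f (relatorK x z y) = relatorK (f x) (f z) (f y) := by
  simp only [relatorK, map_mul, map_commutatorElement, map_inv]

theorem map_relatorH₁ (f : G →* H) (a b c : G) :
    f (relatorH₁ a b c) = relatorH₁ (f a) (f b) (f c) := by
  simp only [relatorH₁, map_mul, map_commutatorElement, map_inv]

theorem map_relatorH₂ (f : G →* H) (a b c : G) :
    f (relatorH₂ a b c) = relatorH₂ (f a) (f b) (f c) := by
  simp only [relatorH₂, map_mul, map_commutatorElement, map_inv, map_pow]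

end Relators

open PresentedGroup

theorem relsH_eq (p : ℤ) :
    relsH p = {relatorH₁ (.of 0) (.of 1) (.of 2), relatorH₂ (.of 0) (.of 1) (.of 2),
      (FreeGroup.of 2)⁻¹ * commWord (.of 0) (.of 1) ^ p} := rfl

theorem relsK_eq (p : ℤ) :
    relsK p = {relatorK (.of 0) (.of 1) (commWord (.of 0) (.of 1) ^ p)} := rfl

theorem relatorH₁_of (p : ℤ) :
    relatorH₁ (of 0) (of 1) (of 2 : PresentedGroup (relsH p)) = 1 :=
  (map_relatorH₁ _ _ _ _).symm.trans <| one_of_mem <| by rw [relsH_eq]; exact Set.mem_insert _ _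

theorem of_two_eq (p : ℤ) :
    (of 2 : PresentedGroup (relsH p)) = commWord (of 0) (of 1) ^ p := by
  have h : mk (relsH p) ((FreeGroup.of 2)⁻¹ * commWord (.of 0) (.of 1) ^ p) = 1 :=
    one_of_mem <| by rw [relsH_eq]; simp
  rw [map_mul, map_inv, map_zpow, map_commWord] at h
  exact inv_mul_eq_one.mp h

theorem relatorK_of (p : ℤ) :
    relatorK (of 0) (of 1) (commWord (of 0) (of 1) ^ p : PresentedGroup (relsK p)) = 1 := by
  have h : mk (relsK p) (relatorK (.of 0) (.of 1) (commWord (.of 0) (.of 1) ^ p)) = 1 :=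
    one_of_mem <| by rw [relsK_eq]; exact Set.mem_singleton _
  rwa [map_relatorK, map_zpow, map_commWord] at h

def toK (p : ℤ) : PresentedGroup (relsH p) →* PresentedGroup (relsK p) :=
  toGroup (f := ![of 0, of 1, commWord (of 0) (of 1) ^ p]) <| by
    have hK := relatorK_of p
    rw [relsH_eq]
    rintro r (rfl | rfl | rfl)
    · simpa [map_relatorH₁, relatorH₁_eq_one_iff] using hK
    · simpa [map_relatorH₂] using relatorH₂_eq_one hK (Commute.zpow_self _ p)
    · simp [map_commWord]

def toH (p : ℤ) : PresentedGroup (relsK p) →* PresentedGroup (relsH p) :=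
  toGroup (f := ![of 0, of 1]) <| by
    rw [relsK_eq]
    rintro r rfl
    simpa [map_relatorK, map_commWord, ← of_two_eq, ← relatorH₁_eq_one_iff] using relatorH₁_of p

theorem toH_comp_toK (p : ℤ) : (toH p).comp (toK p) = MonoidHom.id _ := by
  refine ext fun i => ?_
  fin_cases i <;> simp [toH, toK, toGroup.of, map_commWord, ← of_two_eq]

theorem toK_comp_toH (p : ℤ) : (toK p).comp (toH p) = MonoidHom.id _ := by
  refine ext fun i => ?_
  fin_cases i <;> simp [toH, toK, toGroup.of]

theorem hom_is_well_defined_and_isomorphism (p : ℤ) :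
    ∃ φ : PresentedGroup (relsH p) →* PresentedGroup (relsK p),
      φ (PresentedGroup.of 0) = PresentedGroup.of 0 ∧
      φ (PresentedGroup.of 1) = PresentedGroup.of 1 ∧
      φ (PresentedGroup.of 2) =
        (⁅(PresentedGroup.of 1 : PresentedGroup (relsK p)), (PresentedGroup.of 0)⁻¹⁆ *
          ⁅(PresentedGroup.of 1 : PresentedGroup (relsK p))⁻¹, PresentedGroup.of 0⁆) ^ p ∧
      Function.Bijective φ :=
  ⟨toK p, toGroup.of _, toGroup.of _, toGroup.of _,
    (MonoidHom.toMulEquiv _ _ (toH_comp_toK p) (toK_comp_toH p)).bijective⟩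

end Stmt15
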